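/- Gentle measurement lemma: for a quantum state ρ and an operator A with 0 < A < I, the fidelity satisfies F(ρ, AρA/Tr(A²ρ)) ≥ √(Tr(A²ρ)). -/

import Mathlib

/-!
The fidelity can be written as `F(ρ, σ) = Tr √(√ρ σ √ρ)`, because `MᴴM` and `MMᴴ` have the same
characteristic polynomial and hence the same trace of square roots. For `σ = AρA / t` with
`t = Tr(A²ρ)` one has `√ρ σ √ρ = (√ρ A √ρ)² / t`, whose square root is `√ρ A √ρ / √t`, so
`F = Tr(Aρ) / √t`. Finally `0 ≤ A ≤ 1` gives `A² ≤ A`, hence `t ≤ Tr(Aρ)` and `F ≥ t / √t = √t`.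
-/

open Matrix Kronecker
open scoped ComplexOrder Classical

variable {n : Type*} [Fintype n] [DecidableEq n]

/-- Square root of a positive semidefinite matrix (junk value `0` otherwise). -/
noncomputable def msqrt (A : Matrix n n ℂ) : Matrix n n ℂ :=
  if h : A.PosSemidef then
    (h.1.eigenvectorUnitary : Matrix n n ℂ) * diagonal ((↑) ∘ (√·) ∘ h.1.eigenvalues) *
      (star (h.1.eigenvectorUnitary : Matrix n n ℂ))
  else 0

/-- Trace norm `‖A‖₁ = Tr √(AᴴA)`. -/
noncomputable def traceNorm (A : Matrix n n ℂ) : ℝ :=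
  (msqrt (Aᴴ * A)).trace.re

/-- Fidelity `F(ρ,σ) = ‖√ρ√σ‖₁`. -/
noncomputable def fidelity (ρ σ : Matrix n n ℂ) : ℝ :=
  traceNorm (msqrt ρ * msqrt σ)

/-- Purified distance `P(ρ,σ) = √(1 − F(ρ,σ)²)`. -/
noncomputable def purifiedDist (ρ σ : Matrix n n ℂ) : ℝ :=
  Real.sqrt (1 - (fidelity ρ σ) ^ 2)

open scoped MatrixOrder

section

variable {R : Type*} [PartialOrder R] [Ring R] [StarRing R] [TopologicalSpace R]
  [StarOrderedRing R] [Algebra ℝ R] [ContinuousFunctionalCalculus ℝ R IsSelfAdjoint]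
  [NonnegSpectrumClass ℝ R] [IsSemitopologicalRing R] [T2Space R]

lemma mul_self_le_self_of_nonneg_of_le_one {a : R} (ha₀ : 0 ≤ a) (ha₁ : a ≤ 1) : a * a ≤ a := by
  obtain ⟨s, hs, rfl⟩ : ∃ s : R, 0 ≤ s ∧ s * s = a :=
    ⟨CFC.sqrt a, CFC.sqrt_nonneg a, CFC.sqrt_mul_sqrt_self a⟩
  simpa only [mul_assoc, mul_one] using conjugate_le_conjugate_of_nonneg ha₁ hs

end

lemma msqrt_eq_sqrt (A : Matrix n n ℂ) : msqrt A = CFC.sqrt A := by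
  by_cases h : A.PosSemidef
  · rw [msqrt, dif_pos h, CFC.sqrt_eq_cfc, cfc_nnreal_eq_real _ A, h.1.cfc_eq]
    simp only [IsHermitian.cfc, Unitary.conjStarAlgAut_apply]
    congr 3
    funext x
    simp [max_eq_left (h.eigenvalues_nonneg x)]
  · rw [msqrt, dif_neg h, CFC.sqrt_of_not_nonneg (by rwa [nonneg_iff_posSemidef])]

lemma posSemidef_msqrt (A : Matrix n n ℂ) : (msqrt A).PosSemidef := by
  rw [msqrt_eq_sqrt, ← nonneg_iff_posSemidef]
  exact CFC.sqrt_nonneg A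

lemma msqrt_mul_self {A : Matrix n n ℂ} (hA : A.PosSemidef) : msqrt A * msqrt A = A := by
  rw [msqrt_eq_sqrt]
  exact CFC.sqrt_mul_sqrt_self A hA.nonneg

lemma trace_msqrt {A : Matrix n n ℂ} (hA : A.PosSemidef) :
    (msqrt A).trace = ∑ i, (√(hA.1.eigenvalues i) : ℂ) := by
  rw [msqrt, dif_pos hA, trace_mul_cycle, Unitary.coe_star_mul_self, one_mul, trace_diagonal]
  rfl

lemma trace_msqrt_eq_of_charpoly_eq {A B : Matrix n n ℂ} (hA : A.PosSemidef) (hB : B.PosSemidef)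
    (h : A.charpoly = B.charpoly) : (msqrt A).trace = (msqrt B).trace := by
  rw [trace_msqrt hA, trace_msqrt hB, (hA.1.eigenvalues_eq_eigenvalues_iff hB.1).2 h]

lemma traceNorm_conjTranspose (M : Matrix n n ℂ) : traceNorm Mᴴ = traceNorm M := by
  rw [traceNorm, traceNorm, conjTranspose_conjTranspose,
    trace_msqrt_eq_of_charpoly_eq (posSemidef_self_mul_conjTranspose M)
      (posSemidef_conjTranspose_mul_self M) (charpoly_mul_comm M Mᴴ)]

lemma fidelity_eq_re_trace_msqrt (ρ : Matrix n n ℂ) {σ : Matrix n n ℂ} (hσ : σ.PosSemidef) :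
    fidelity ρ σ = (msqrt (msqrt ρ * σ * msqrt ρ)).trace.re := by
  rw [fidelity, ← traceNorm_conjTranspose, traceNorm, conjTranspose_conjTranspose,
    conjTranspose_mul, (posSemidef_msqrt ρ).1.eq, (posSemidef_msqrt σ).1.eq]
  conv_rhs => rw [← msqrt_mul_self hσ]
  simp only [mul_assoc]

lemma msqrt_smul_mul_self {X : Matrix n n ℂ} (hX : X.PosSemidef) {c : ℝ} (hc : 0 ≤ c) :
    msqrt ((c : ℂ) • (X * X)) = (√c : ℂ) • X := by
  rw [msqrt_eq_sqrt]
  refine CFC.sqrt_unique ?_ ?_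
  · rw [smul_mul_smul_comm, ← Complex.ofReal_mul, Real.mul_self_sqrt hc]
  · exact (hX.smul (by positivity)).nonneg

lemma re_trace_mul_le_of_le {X Y ρ : Matrix n n ℂ} (hXY : X ≤ Y) (hρ : ρ.PosSemidef) :
    (X * ρ).trace.re ≤ (Y * ρ).trace.re := by
  have h := conjugate_le_conjugate_of_nonneg hXY (posSemidef_msqrt ρ).nonneg
  have trace_conj (Z : Matrix n n ℂ) : (msqrt ρ * Z * msqrt ρ).trace = (Z * ρ).trace := by
    rw [trace_mul_cycle, msqrt_mul_self hρ, trace_mul_comm]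
  have hnonneg := (le_iff.1 h).trace_nonneg
  rw [trace_sub, trace_conj, trace_conj, sub_nonneg] at hnonneg
  exact Complex.re_le_re hnonneg

lemma fidelity_smul_conj {ρ A : Matrix n n ℂ} (hρ : ρ.PosSemidef) (hA : A.PosSemidef) {c : ℝ}
    (hc : 0 ≤ c) : fidelity ρ ((c : ℂ) • (A * ρ * A)) = √c * (A * ρ).trace.re := by
  set X := msqrt ρ * A * msqrt ρ
  have hX : X.PosSemidef := by
    simpa only [(posSemidef_msqrt ρ).1.eq] using hA.mul_mul_conjTranspose_same (msqrt ρ)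
  have hσ : ((c : ℂ) • (A * ρ * A)).PosSemidef := by
    simpa only [hA.1.eq] using (hρ.mul_mul_conjTranspose_same A).smul (by positivity)
  have hconj : msqrt ρ * ((c : ℂ) • (A * ρ * A)) * msqrt ρ = (c : ℂ) • (X * X) := by
    have hρ' : A * (msqrt ρ * msqrt ρ) * A = A * ρ * A := by rw [msqrt_mul_self hρ]
    simp only [← hρ', X, Matrix.mul_smul, Matrix.smul_mul, mul_assoc]
  rw [fidelity_eq_re_trace_msqrt ρ hσ, hconj, msqrt_smul_mul_self hX hc, trace_smul, smul_eq_mul,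
    Complex.re_ofReal_mul, trace_mul_cycle, msqrt_mul_self hρ, trace_mul_comm]

theorem gentle_measurement_general (ρ A : Matrix n n ℂ)
    (hρ : ρ.PosSemidef)
    (hA : A.PosSemidef) (hAI : (1 - A).PosSemidef)
    (ht : 0 < ((A * A * ρ).trace).re) :
    Real.sqrt (((A * A * ρ).trace).re) ≤
      fidelity ρ (((((A * A * ρ).trace).re : ℂ)⁻¹) • (A * ρ * A)) := by
  set t := ((A * A * ρ).trace).re
  have hmono : t ≤ (A * ρ).trace.re :=
    re_trace_mul_le_of_le (mul_self_le_self_of_nonneg_of_le_one hA.nonneg (le_iff.2 hAI)) hρ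
  rw [← Complex.ofReal_inv, fidelity_smul_conj hρ hA (inv_nonneg.2 ht.le), Real.sqrt_inv]
  calc √t = (√t)⁻¹ * t := by rw [inv_mul_eq_div, Real.div_sqrt]
    _ ≤ (√t)⁻¹ * (A * ρ).trace.re := by gcongr

/-- Gentle measurement lemma: `F(ρ, AρA/Tr(A²ρ)) ≥ √(Tr(A²ρ))`. -/
theorem gentle_measurement (ρ A : Matrix n n ℂ)
    (hρ : ρ.PosSemidef) (hρ1 : ρ.trace = 1)
    (hA : A.PosSemidef) (hAI : (1 - A).PosSemidef)
    (ht : 0 < ((A * A * ρ).trace).re) :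
    Real.sqrt (((A * A * ρ).trace).re) ≤
      fidelity ρ (((((A * A * ρ).trace).re : ℂ)⁻¹) • (A * ρ * A)) :=
  gentle_measurement_general ρ A hρ hA hAI ht
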